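/- Let $R$ be a ring, let $\{A_s\}$ and $\{B_t\}$ be cofiltered systems of $R$-modules, and let $f$ be a map of pro-$R$-modules such that for every injective $R$-module $I$, the induced map $\mathrm{colim}_t \mathrm{Hom}(B_t, I) \to \mathrm{colim}_s \mathrm{Hom}(A_s, I)$ is an isomorphism. Then $f$ is an isomorphism of pro-$R$-modules (i.e., an isomorphism in the pro-category of $R$-modules). -/
import Mathlib

open CategoryTheory Limits

theorem stmt19_sec (R : Type) [Ring R]
    (J : Type) [SmallCategory J] [IsCofiltered J]
    (A B : J ⥤ ModuleCat R) (f : A ⟶ B)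
    (hsurj : ∀ (I : ModuleCat R), Injective I → ∀ (s : J) (g : A.obj s ⟶ I),
      ∃ (t : J) (φ : t ⟶ s) (h : B.obj t ⟶ I),
        f.app t ≫ h = A.map φ ≫ g)
    (hinj : ∀ (I : ModuleCat R), Injective I → ∀ (s : J) (h : B.obj s ⟶ I),
      (∃ (t : J) (φ : t ⟶ s), A.map φ ≫ f.app s ≫ h = 0) →
      ∃ (t : J) (φ : t ⟶ s), B.map φ ≫ h = 0) :
    ∀ s : J, ∃ (t : J) (φ : t ⟶ s) (h : B.obj t ⟶ A.obj s),
      f.app t ≫ h = A.map φ := by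
  intro s
  set e : A.obj s ⟶ Injective.under (A.obj s) := Injective.ι (A.obj s) with he
  obtain ⟨t, φ, h₀, hh₀⟩ := hsurj _ (Injective.injective_under _) s e
  set q : Injective.under (A.obj s) ⟶ cokernel e := cokernel.π e with hq
  set e' : cokernel e ⟶ Injective.under (cokernel e) := Injective.ι (cokernel e) with he'
  obtain ⟨u, ψ, hψ⟩ := hinj _ (Injective.injective_under _) t (h₀ ≫ q ≫ e')
    ⟨t, 𝟙 t, by
      simp only [Functor.map_id, Category.id_comp, ← Category.assoc, hh₀]
      simp [hq]⟩
  have hz : (B.map ψ ≫ h₀) ≫ q = 0 := by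
    rw [← cancel_mono e']
    simpa using hψ
  refine ⟨u, ψ ≫ φ, Abelian.monoLift e (B.map ψ ≫ h₀) hz, ?_⟩
  rw [← cancel_mono e]
  have := f.naturality ψ
  calc f.app u ≫ Abelian.monoLift e (B.map ψ ≫ h₀) hz ≫ e
      = f.app u ≫ B.map ψ ≫ h₀ := by rw [Abelian.monoLift_comp]
    _ = A.map ψ ≫ f.app t ≫ h₀ := by rw [← Category.assoc, ← f.naturality ψ, Category.assoc]
    _ = A.map (ψ ≫ φ) ≫ e := by rw [hh₀, Functor.map_comp, Category.assoc]


theorem stmt19 (R : Type) [Ring R]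
    (J : Type) [SmallCategory J] [IsCofiltered J]
    (A B : J ⥤ ModuleCat R) (f : A ⟶ B)
    (hsurj : ∀ (I : ModuleCat R), Injective I → ∀ (s : J) (g : A.obj s ⟶ I),
      ∃ (t : J) (φ : t ⟶ s) (h : B.obj t ⟶ I),
        f.app t ≫ h = A.map φ ≫ g)
    (hinj : ∀ (I : ModuleCat R), Injective I → ∀ (s : J) (h : B.obj s ⟶ I),
      (∃ (t : J) (φ : t ⟶ s), A.map φ ≫ f.app s ≫ h = 0) →
      ∃ (t : J) (φ : t ⟶ s), B.map φ ≫ h = 0) :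
    ∀ s : J, ∃ (t : J) (φ : t ⟶ s) (h : B.obj t ⟶ A.obj s),
      h ≫ f.app s = B.map φ ∧ f.app t ≫ h = A.map φ := by
  intro s
  obtain ⟨t, φ, h, hh⟩ := stmt19_sec R J A B f hsurj hinj s
  obtain ⟨u, ψ, k, hk⟩ := stmt19_sec R J A B f hsurj hinj t
  set e : B.obj t ⟶ Injective.under (B.obj t) := Injective.ι (B.obj t) with he
  have hd0 : f.app u ≫ (B.map ψ - k ≫ f.app t) = 0 := by
    rw [Preadditive.comp_sub, ← Category.assoc, hk, f.naturality ψ, sub_self]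
  obtain ⟨v, χ, hχ⟩ := hinj _ (Injective.injective_under _) u ((B.map ψ - k ≫ f.app t) ≫ e)
    ⟨u, 𝟙 u, by
      rw [CategoryTheory.Functor.map_id, Category.id_comp, ← Category.assoc, hd0,
        Limits.zero_comp]⟩
  have hrel : B.map χ ≫ B.map ψ = B.map χ ≫ k ≫ f.app t := by
    have : B.map χ ≫ (B.map ψ - k ≫ f.app t) = 0 := by
      rw [← cancel_mono e]
      simpa using hχ
    rw [Preadditive.comp_sub, sub_eq_zero] at this
    exact this
  refine ⟨v, χ ≫ ψ ≫ φ, B.map (χ ≫ ψ) ≫ h, ?_, ?_⟩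
  · calc (B.map (χ ≫ ψ) ≫ h) ≫ f.app s
        = B.map χ ≫ B.map ψ ≫ h ≫ f.app s := by
          simp [Functor.map_comp, Category.assoc]
      _ = B.map χ ≫ k ≫ f.app t ≫ h ≫ f.app s := by
          rw [← Category.assoc, ← Category.assoc, hrel]
          simp [Category.assoc]
      _ = B.map χ ≫ k ≫ A.map φ ≫ f.app s := by rw [← Category.assoc (f.app t), hh]
      _ = B.map χ ≫ k ≫ f.app t ≫ B.map φ := by rw [f.naturality φ]
      _ = B.map χ ≫ B.map ψ ≫ B.map φ := by
          rw [reassoc_of% hrel]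
      _ = B.map (χ ≫ ψ ≫ φ) := by simp [Functor.map_comp]
  · calc f.app v ≫ B.map (χ ≫ ψ) ≫ h
        = (f.app v ≫ B.map (χ ≫ ψ)) ≫ h := by rw [Category.assoc]
      _ = (A.map (χ ≫ ψ) ≫ f.app t) ≫ h := by rw [f.naturality]
      _ = A.map (χ ≫ ψ) ≫ A.map φ := by rw [Category.assoc, hh]
      _ = A.map (χ ≫ ψ ≫ φ) := by simp [Functor.map_comp]

/-! original docstring preserved below as comment -/
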